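/- Let a, b, c be positive integers with c > b and b ≥ 2a. In the partizan subtraction game with S_L = {a, b} and S_R = {c}, the outcome of a heap of size n is: P if n < a; L if a ≤ n < c; N if c ≤ n < c + a; and L for all n ≥ c + a. -/
import Mathlib


mutual
def LeftFirstWins (SL SR : Finset ℕ) : ℕ → Prop
  | n => ∃ s ∈ SL, ∃ (_ : 0 < s) (_ : s ≤ n), ¬ RightFirstWins SL SR (n - s)
  termination_by n => n
  decreasing_by omega
def RightFirstWins (SL SR : Finset ℕ) : ℕ → Prop
  | n => ∃ s ∈ SR, ∃ (_ : 0 < s) (_ : s ≤ n), ¬ LeftFirstWins SL SR (n - s)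
  termination_by n => n
  decreasing_by omega
end

inductive Outcome | P | L | R | N
deriving DecidableEq

open Classical in
noncomputable def outcome (SL SR : Finset ℕ) (n : ℕ) : Outcome :=
  if LeftFirstWins SL SR n then
    if RightFirstWins SL SR n then .N else .L
  else
    if RightFirstWins SL SR n then .R else .P

lemma key_2 (a b c : ℕ) (ha : 0 < a) (hcb : b < c) (hba : 2 * a ≤ b) :
    ∀ n, (LeftFirstWins {a, b} {c} n ↔ a ≤ n) ∧
         (RightFirstWins {a, b} {c} n ↔ c ≤ n ∧ n < c + a) := by
  intro n
  induction n using Nat.strong_induction_on with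
  | _ n ih =>
    constructor
    · rw [LeftFirstWins]
      constructor
      · rintro ⟨s, hs, hpos, hsn, -⟩
        simp only [Finset.mem_insert, Finset.mem_singleton] at hs
        omega
      · intro han
        by_cases hcase : c ≤ n - a ∧ n - a < c + a
        · -- use b
          refine ⟨b, ?_, by omega, by omega, ?_⟩
          · simp [Finset.mem_insert]
          · rw [(ih (n - b) (by omega)).2]
            omega
        · refine ⟨a, ?_, ha, han, ?_⟩
          · simp [Finset.mem_insert]
          · rw [(ih (n - a) (by omega)).2]
            omega
    · rw [RightFirstWins]
      constructor
      · rintro ⟨s, hs, hpos, hsn, hL⟩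
        simp only [Finset.mem_singleton] at hs
        subst hs
        rw [(ih (n - s) (by omega)).1] at hL
        omega
      · rintro ⟨hcn, hna⟩
        refine ⟨c, Finset.mem_singleton_self c, by omega, hcn, ?_⟩
        rw [(ih (n - c) (by omega)).1]
        omega

theorem stmt_2 (a b c : ℕ) (ha : 0 < a) (hcb : b < c) (hba : 2 * a ≤ b) (n : ℕ) :
    (n < a → outcome {a, b} {c} n = .P) ∧
    (a ≤ n → n < c → outcome {a, b} {c} n = .L) ∧
    (c ≤ n → n < c + a → outcome {a, b} {c} n = .N) ∧
    (c + a ≤ n → outcome {a, b} {c} n = .L) := by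
  have h := key_2 a b c ha hcb hba n
  unfold outcome
  refine ⟨?_, ?_, ?_, ?_⟩ <;> intros <;>
    simp only [h.1, h.2, if_pos, if_neg] <;>
    split_ifs <;> first | rfl | omega
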